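/- One-shot classical capacity upper bound (specialized form): let 𝒩, Λ be channels and λ = 2^{D}, where D ≥ 0 satisfies that λΛ − 𝒩 is a positive map. Let Γ = log₂ sup_{Θ_M} Σ_{m} tr[E_m Λ(ρ_m)] (sup over all M and M-codes). Then for every 0 ≤ ε < 1, the one-shot classical capacity C^ε_{(1)}(𝒩) = max{log₂ M : ∃ Θ_M with p_s(Θ_M,𝒩) ≥ 1−ε} satisfies C^ε_{(1)}(𝒩) ≤ D + Γ + log₂(1/(1−ε)). -/

import Mathlib

open scoped BigOperators Kronecker ENNReal NNReal ComplexOrder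
open Matrix

noncomputable section

/-- A density matrix: positive semidefinite with unit trace. -/
def IsDensity {ι : Type*} [Fintype ι] (ρ : Matrix ι ι ℂ) : Prop :=
  ρ.PosSemidef ∧ ρ.trace = 1

/-- A completely positive trace-preserving map, presented by a Kraus decomposition. -/
def IsCPTP {ι κ : Type*} [Fintype ι] [DecidableEq ι] [Fintype κ] [DecidableEq κ]
    (Φ : Matrix ι ι ℂ → Matrix κ κ ℂ) : Prop :=
  ∃ (r : ℕ) (K : Fin r → Matrix κ ι ℂ),
    (∀ M, Φ M = ∑ i, K i * M * (K i)ᴴ) ∧ (∑ i, (K i)ᴴ * K i = 1)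

/-- Ampliation `Φ ⊗ id` of a superoperator, acting on the first tensor factor. -/
def ampL {ι κ α : Type*} (Φ : Matrix ι ι ℂ → Matrix κ κ ℂ) :
    Matrix (ι × α) (ι × α) ℂ → Matrix (κ × α) (κ × α) ℂ :=
  fun M => Matrix.of fun p q =>
    Φ (Matrix.of fun i j => M (i, p.2) (j, q.2)) p.1 q.1

/-- Ampliation `id ⊗ Λ` of a superoperator, acting on the second tensor factor. -/
def ampR {ι κ α : Type*} (Λ : Matrix ι ι ℂ → Matrix κ κ ℂ) :
    Matrix (α × ι) (α × ι) ℂ → Matrix (α × κ) (α × κ) ℂ :=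
  fun M => Matrix.of fun p q =>
    Λ (Matrix.of fun i j => M (p.1, i) (q.1, j)) p.2 q.2

/-- Tensor product `Φ ⊗ Λ` of superoperators. -/
def tensorMap {ι κ ι' κ' : Type*} (Φ : Matrix ι ι ℂ → Matrix κ κ ℂ)
    (Λ : Matrix ι' ι' ℂ → Matrix κ' κ' ℂ) :
    Matrix (ι × ι') (ι × ι') ℂ → Matrix (κ × κ') (κ × κ') ℂ :=
  fun M => ampL Φ (ampR Λ M)

/-- The positive semidefinite square root of a positive semidefinite matrix
(the former Mathlib `Matrix.PosSemidef.sqrt`, spelled out). -/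
def posSemidefSqrt {n : Type*} [Fintype n] [DecidableEq n] {A : Matrix n n ℂ}
    (hA : A.PosSemidef) : Matrix n n ℂ :=
  hA.1.eigenvectorUnitary.1 * diagonal ((↑) ∘ (√·) ∘ hA.1.eigenvalues) *
  (star hA.1.eigenvectorUnitary : Matrix n n ℂ)

/-- Trace norm `‖M‖₁ = tr √(MᴴM)`. -/
def traceNorm {ι : Type*} [Fintype ι] [DecidableEq ι] (M : Matrix ι ι ℂ) : ℝ :=
  ((posSemidefSqrt (Matrix.posSemidef_conjTranspose_mul_self M)).trace).re

/-- Diamond norm: supremum over finite-dimensional ancillas and joint states of the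
trace norm of the ampliated output. -/
def diamondNorm {ι κ : Type*} [Fintype ι] [DecidableEq ι] [Fintype κ] [DecidableEq κ]
    (Φ : Matrix ι ι ℂ → Matrix κ κ ℂ) : ℝ :=
  ⨆ a : ℕ, ⨆ ρ : {ρ : Matrix (ι × Fin a) (ι × Fin a) ℂ // IsDensity ρ},
    traceNorm (ampL Φ (α := Fin a) ρ.1)

/-- An `M`-code: `M` input states together with a decoding POVM. -/
structure MCode (ι κ : Type*) [Fintype ι] [Fintype κ] [DecidableEq κ] (M : ℕ) where
  ρ : Fin M → Matrix ι ι ℂ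
  E : Fin M → Matrix κ κ ℂ
  hρ : ∀ m, IsDensity (ρ m)
  hE : ∀ m, (E m).PosSemidef
  hsum : ∑ m, E m = 1

/-- Average success probability `p_s(Θ_M, 𝒩) = (1/M) Σ_m tr[E_m 𝒩(ρ_m)]`. -/
def ps {ι κ : Type*} [Fintype ι] [Fintype κ] [DecidableEq κ] {M : ℕ}
    (Θ : MCode ι κ M) (𝒩 : Matrix ι ι ℂ → Matrix κ κ ℂ) : ℝ :=
  (M : ℝ)⁻¹ * ∑ m, ((Θ.E m * 𝒩 (Θ.ρ m)).trace).re

/-!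
Positivity of `2^D Λ - 𝒩` gives `tr[E_m 𝒩(ρ_m)] ≤ 2^D tr[E_m Λ(ρ_m)]` term by term, so a code
with `p_s ≥ 1 - ε` has `M (1 - ε) ≤ Σ_m tr[E_m 𝒩(ρ_m)] ≤ 2^D 2^Γ`; take `log₂`. The supremum
defining `Γ` is a genuine one because `Λ(ρ_m) ≤ 1` bounds every code's sum by `tr 1 = d_out`.
-/

namespace Matrix

variable {n 𝕜 : Type*} [Fintype n] [RCLike 𝕜]

open scoped MatrixOrder in
lemma PosSemidef.re_trace_mul_nonneg {A B : Matrix n n 𝕜} (hA : A.PosSemidef)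
    (hB : B.PosSemidef) : 0 ≤ RCLike.re (A * B).trace := by
  classical
  have hsqrt : (A * B).trace = (CFC.sqrt A * B * CFC.sqrt A).trace := by
    conv_lhs => rw [← CFC.sqrt_mul_sqrt_self A hA.nonneg]
    rw [mul_assoc, trace_mul_comm]
  have hconj : (CFC.sqrt A * B * CFC.sqrt A).PosSemidef := by
    simpa only [(CFC.sqrt_nonneg A).posSemidef.isHermitian.eq] using
      hB.mul_mul_conjTranspose_same (CFC.sqrt A)
  rw [hsqrt]
  exact (RCLike.nonneg_iff.mp hconj.trace_nonneg).1

lemma PosSemidef.re_trace_mul_le_re_trace_mul {A B C : Matrix n n 𝕜} (hA : A.PosSemidef)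
    (hBC : (C - B).PosSemidef) : RCLike.re (A * B).trace ≤ RCLike.re (A * C).trace := by
  have := hA.re_trace_mul_nonneg hBC
  rwa [mul_sub, trace_sub, map_sub, sub_nonneg] at this

end Matrix

open scoped MatrixOrder in
lemma IsDensity.posSemidef_one_sub {ι : Type*} [Fintype ι] [DecidableEq ι]
    {ρ : Matrix ι ι ℂ} (hρ : IsDensity ρ) : (1 - ρ).PosSemidef := by
  obtain ⟨hpsd, htr⟩ := hρ
  have hsum : ∑ i, hpsd.isHermitian.eigenvalues i = 1 := by
    apply RCLike.ofReal_injective (K := ℂ)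
    rw [RCLike.ofReal_sum, ← hpsd.isHermitian.trace_eq_sum_eigenvalues, htr, RCLike.ofReal_one]
  have hle : ρ ≤ algebraMap ℝ (Matrix ι ι ℂ) 1 := by
    refine le_algebraMap_of_spectrum_le (fun x hx => ?_) hpsd.isHermitian.isSelfAdjoint
    obtain ⟨i, rfl⟩ := hpsd.isHermitian.spectrum_real_eq_range_eigenvalues ▸ hx
    rw [← hsum]
    exact Finset.single_le_sum (fun j _ => hpsd.eigenvalues_nonneg j) (Finset.mem_univ i)
  simpa [Matrix.le_iff] using hle

namespace IsCPTP

variable {ι κ : Type*} [Fintype ι] [DecidableEq ι] [Fintype κ] [DecidableEq κ]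
  {Φ : Matrix ι ι ℂ → Matrix κ κ ℂ}

lemma posSemidef (hΦ : IsCPTP Φ) {ρ : Matrix ι ι ℂ} (hρ : ρ.PosSemidef) : (Φ ρ).PosSemidef := by
  obtain ⟨r, K, hK, -⟩ := hΦ
  rw [hK]
  exact Finset.sum_induction _ Matrix.PosSemidef (fun _ _ => .add) .zero
    fun i _ => hρ.mul_mul_conjTranspose_same (K i)

lemma trace_eq (hΦ : IsCPTP Φ) (ρ : Matrix ι ι ℂ) : (Φ ρ).trace = ρ.trace := by
  obtain ⟨r, K, hK, hsum⟩ := hΦ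
  calc (Φ ρ).trace = ∑ i, ((K i)ᴴ * K i * ρ).trace := by
        rw [hK, trace_sum]
        exact Finset.sum_congr rfl fun i _ => trace_mul_cycle _ _ _
    _ = ρ.trace := by rw [← trace_sum, ← Finset.sum_mul, hsum, one_mul]

lemma isDensity (hΦ : IsCPTP Φ) {ρ : Matrix ι ι ℂ} (hρ : IsDensity ρ) : IsDensity (Φ ρ) :=
  ⟨hΦ.posSemidef hρ.1, (hΦ.trace_eq ρ).trans hρ.2⟩

end IsCPTP

namespace MCode

variable {ι κ : Type*} [Fintype ι] [Fintype κ] [DecidableEq κ] {M : ℕ}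

def successSum (Θ : MCode ι κ M) (Φ : Matrix ι ι ℂ → Matrix κ κ ℂ) : ℝ :=
  ∑ m, ((Θ.E m * Φ (Θ.ρ m)).trace).re

lemma ps_eq (Θ : MCode ι κ M) (Φ : Matrix ι ι ℂ → Matrix κ κ ℂ) :
    ps Θ Φ = (M : ℝ)⁻¹ * Θ.successSum Φ := rfl

lemma successSum_le_card (Θ : MCode ι κ M) {Φ : Matrix ι ι ℂ → Matrix κ κ ℂ}
    (hΦ : ∀ m, IsDensity (Φ (Θ.ρ m))) : Θ.successSum Φ ≤ Fintype.card κ := by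
  have hterm (m : Fin M) : ((Θ.E m * Φ (Θ.ρ m)).trace).re ≤ (Θ.E m).trace.re := by
    simpa only [RCLike.re_to_complex, mul_one] using
      (Θ.hE m).re_trace_mul_le_re_trace_mul (hΦ m).posSemidef_one_sub
  calc Θ.successSum Φ ≤ ∑ m, (Θ.E m).trace.re := Finset.sum_le_sum fun m _ => hterm m
    _ = Fintype.card κ := by
        simp_rw [← Complex.re_sum, ← trace_sum, Θ.hsum, trace_one, Complex.natCast_re]

lemma successSum_le_mul_successSum (Θ : MCode ι κ M) {𝒩 Λ : Matrix ι ι ℂ → Matrix κ κ ℂ}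
    {c : ℝ} (hpos : ∀ ρ : Matrix ι ι ℂ, ρ.PosSemidef → (c • Λ ρ - 𝒩 ρ).PosSemidef) :
    Θ.successSum 𝒩 ≤ c * Θ.successSum Λ := by
  rw [successSum, successSum, Finset.mul_sum]
  refine Finset.sum_le_sum fun m _ => ?_
  have := (Θ.hE m).re_trace_mul_le_re_trace_mul (hpos _ (Θ.hρ m).1)
  rwa [Matrix.mul_smul, trace_smul, Complex.real_smul, RCLike.re_to_complex, RCLike.re_to_complex,
    Complex.re_ofReal_mul] at this

end MCode

lemma bddAbove_range_successSum {ι κ : Type*} [Fintype ι] [DecidableEq ι] [Fintype κ]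
    [DecidableEq κ] {Λ : Matrix ι ι ℂ → Matrix κ κ ℂ} (hΛ : IsCPTP Λ) :
    BddAbove (Set.range fun c : Σ M, MCode ι κ M => c.2.successSum Λ) :=
  ⟨Fintype.card κ, Set.forall_mem_range.2 fun c =>
    c.2.successSum_le_card fun m => hΛ.isDensity (c.2.hρ m)⟩

theorem one_shot_capacity_upper_bound_general {dIn dOut : ℕ}
    (𝒩 Λ : Matrix (Fin dIn) (Fin dIn) ℂ → Matrix (Fin dOut) (Fin dOut) ℂ)
    (hΛ : IsCPTP Λ) (D : ℝ)
    (hpos : ∀ ρ : Matrix (Fin dIn) (Fin dIn) ℂ, ρ.PosSemidef →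
      (((2 : ℝ) ^ D) • Λ ρ - 𝒩 ρ).PosSemidef)
    (Γ : ℝ)
    (hΓ : Γ = Real.logb 2 (⨆ c : Σ M : ℕ, MCode (Fin dIn) (Fin dOut) M,
      ∑ m, ((c.2.E m * Λ (c.2.ρ m)).trace).re))
    (ε : ℝ) (hε1 : ε < 1) :
    ∀ (M : ℕ), 0 < M → ∀ Θ : MCode (Fin dIn) (Fin dOut) M,
      1 - ε ≤ ps Θ 𝒩 →
      Real.logb 2 M ≤ D + Γ + Real.logb 2 (1 / (1 - ε)) := by
  intro M hM Θ hps
  set S := ⨆ c : Σ M : ℕ, MCode (Fin dIn) (Fin dOut) M, c.2.successSum Λ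
  have hM' : (0 : ℝ) < M := Nat.cast_pos.2 hM
  have hε : 0 < 1 - ε := sub_pos.2 hε1
  have hsucc : M * (1 - ε) ≤ Θ.successSum 𝒩 := by
    rwa [MCode.ps_eq, ← div_eq_inv_mul, le_div_iff₀' hM'] at hps
  have hMS : M * (1 - ε) ≤ 2 ^ D * S :=
    hsucc.trans <| (Θ.successSum_le_mul_successSum hpos).trans <|
      mul_le_mul_of_nonneg_left (le_ciSup (bddAbove_range_successSum hΛ) ⟨M, Θ⟩) (by positivity)
  have hS : 0 < S := pos_of_mul_pos_right ((mul_pos hM' hε).trans_le hMS) (by positivity)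
  calc Real.logb 2 M ≤ Real.logb 2 (2 ^ D * S * (1 / (1 - ε))) := by
        refine Real.logb_le_logb_of_le one_lt_two hM' ?_
        rwa [mul_one_div, le_div_iff₀ hε]
    _ = D + Γ + Real.logb 2 (1 / (1 - ε)) := by
        rw [Real.logb_mul (by positivity) (by positivity), Real.logb_mul (by positivity) hS.ne',
          Real.logb_rpow two_pos (by norm_num), hΓ]
        rfl

/-- One-shot classical capacity upper bound, δ = κ = 0 version of
Theorem 1: if `2^D Λ − 𝒩` is a positive map (`D ≥ 0`), and
`Γ = log₂ sup_{codes} Σ_m tr[E_m Λ(ρ_m)]`, then every `M`-code with success probability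
at least `1 − ε` satisfies `log₂ M ≤ D + Γ + log₂(1/(1−ε))`; i.e.
`C^ε_{(1)}(𝒩) ≤ D + Γ + log₂(1/(1−ε))`. -/
theorem one_shot_capacity_upper_bound {dIn dOut : ℕ}
    (𝒩 Λ : Matrix (Fin dIn) (Fin dIn) ℂ → Matrix (Fin dOut) (Fin dOut) ℂ)
    (h𝒩 : IsCPTP 𝒩) (hΛ : IsCPTP Λ) (D : ℝ) (hD : 0 ≤ D)
    (hpos : ∀ ρ : Matrix (Fin dIn) (Fin dIn) ℂ, ρ.PosSemidef →
      (((2 : ℝ) ^ D) • Λ ρ - 𝒩 ρ).PosSemidef)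
    (Γ : ℝ)
    (hΓ : Γ = Real.logb 2 (⨆ c : Σ M : ℕ, MCode (Fin dIn) (Fin dOut) M,
      ∑ m, ((c.2.E m * Λ (c.2.ρ m)).trace).re))
    (ε : ℝ) (hε0 : 0 ≤ ε) (hε1 : ε < 1) :
    ∀ (M : ℕ), 0 < M → ∀ Θ : MCode (Fin dIn) (Fin dOut) M,
      1 - ε ≤ ps Θ 𝒩 →
      Real.logb 2 M ≤ D + Γ + Real.logb 2 (1 / (1 - ε)) :=
  one_shot_capacity_upper_bound_general 𝒩 Λ hΛ D hpos Γ hΓ ε hε1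

end
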